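/- Let A ∈ ℝ^{m×m}, B ∈ ℝ^{m×1}, C ∈ ℝ^{1×m}. Let α₁ < β₁ and α₂ < β₂ be real scalars, ε₁, ε₂ > 0, M₁ > 0. Suppose for i = 1, 2 the matrices (P_i, L_i, J_i), with P_i symmetric positive definite, satisfy the ε_i-KYP conditions for the shifted realization (A − α_i BC, B, C, 1/(β_i − α_i)): P_i(A − α_i BC) + (A − α_i BC)ᵀP_i = −L_iᵀL_i − (ε_i/2)P_i, P_i B = Cᵀ − L_iᵀJ_i, J_iᵀJ_i = 2/(β_i − α_i). Let n : ℝ × ℝ → ℝ be continuous and suppose: (b) (1/(β₁−α₁))·(n(t,y) − α₁y)·(β₁y − n(t,y)) > −M₁ for all t, y; and (c) there exists η₁ > 0 such that for all t and all y with |y| < 2√((M₁/ε₁)·C P₁⁻¹ Cᵀ) + η₁, one has (n(t,y) − α₂y)·(β₂y − n(t,y)) ≥ 0. Then every differentiable solution x : [0, ∞) → ℝ^m of x'(t) = A x(t) − B n(t, C x(t)) satisfies x(t) → 0 as t → ∞. -/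

import Mathlib

/-!
For a symmetric `P` satisfying the ε-KYP conditions of the realization shifted by the sector
`[α, β]`, completing the square turns `V = xᵀ P x` into a Lyapunov function with
`V' ≤ -(ε/2) V - 2 (u - α y)(β y - u) / (β - α)` along the Lur'e system.
In the first step the weak bound (b) gives `V₁' ≤ -(ε₁/2) V₁ + 2 M₁`, so by Grönwall `V₁` is
eventually below `4 M₁ / ε₁ + δ`, and Cauchy–Schwarz `(C x)² ≤ V₁ · C P₁⁻¹ Cᵀ` confines the
output to the region where (c) places the nonlinearity in the sector `[α₂, β₂]`.
From then on `V₂' ≤ -(ε₂/2) V₂`, so `V₂ → 0`, hence `x → 0`.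
-/

open Matrix Filter Topology

namespace Matrix

variable {ι κ : Type*}

theorem PosDef.isSymm {P : Matrix ι ι ℝ} (hP : P.PosDef) : P.IsSymm :=
  isHermitian_iff_isSymm.1 hP.isHermitian

variable [Fintype ι] [Fintype κ]

theorem IsSymm.dotProduct_mulVec_comm {P : Matrix ι ι ℝ} (hP : P.IsSymm) (v w : ι → ℝ) :
    v ⬝ᵥ P *ᵥ w = w ⬝ᵥ P *ᵥ v := by
  rw [dotProduct_mulVec, ← mulVec_transpose, hP.eq, dotProduct_comm]

theorem dotProduct_transpose_mul_mulVec (M N : Matrix κ ι ℝ) (v w : ι → ℝ) :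
    v ⬝ᵥ (Mᵀ * N) *ᵥ w = M *ᵥ v ⬝ᵥ N *ᵥ w := by
  rw [← mulVec_mulVec, dotProduct_mulVec, vecMul_transpose]

theorem PosDef.dotProduct_mulVec_self_nonneg {P : Matrix ι ι ℝ} (hP : P.PosDef) (v : ι → ℝ) :
    0 ≤ v ⬝ᵥ P *ᵥ v := by
  simpa using hP.posSemidef.dotProduct_mulVec_nonneg v

theorem PosDef.sq_dotProduct_le [DecidableEq ι] {P : Matrix ι ι ℝ} (hP : P.PosDef)
    (c v : ι → ℝ) : (c ⬝ᵥ v) ^ 2 ≤ (v ⬝ᵥ P *ᵥ v) * (c ⬝ᵥ P⁻¹ *ᵥ c) := by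
  set d := P⁻¹ *ᵥ c
  have hPd : P *ᵥ d = c := by
    rw [mulVec_mulVec, mul_nonsing_inv _ (isUnit_iff_ne_zero.2 hP.det_pos.ne'), one_mulVec]
  -- the quadratic `s ↦ (v + s d)ᵀ P (v + s d)` is nonnegative, so its discriminant is `≤ 0`
  have hquad : ∀ s : ℝ, 0 ≤ (c ⬝ᵥ d) * (s * s) + 2 * (c ⬝ᵥ v) * s + v ⬝ᵥ P *ᵥ v := by
    intro s
    have h := hP.dotProduct_mulVec_self_nonneg (v + s • d)
    have hdv : d ⬝ᵥ P *ᵥ v = c ⬝ᵥ v := by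
      rw [hP.isSymm.dotProduct_mulVec_comm, hPd, dotProduct_comm]
    simp only [mulVec_add, mulVec_smul, hPd, add_dotProduct, dotProduct_add, smul_dotProduct,
      dotProduct_smul, hdv, smul_eq_mul] at h
    rw [dotProduct_comm v c, dotProduct_comm d c] at h
    linarith
  have hdiscrim := discrim_le_zero hquad
  rw [discrim] at hdiscrim
  linarith

theorem PosDef.tendsto_zero_of_tendsto_dotProduct_mulVec [DecidableEq ι] {P : Matrix ι ι ℝ}
    (hP : P.PosDef) {α : Type*} {l : Filter α} {x : α → ι → ℝ}
    (h : Tendsto (fun t => x t ⬝ᵥ P *ᵥ x t) l (𝓝 0)) : Tendsto x l (𝓝 0) := by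
  refine tendsto_pi_nhds.2 fun i => ?_
  have hbound : Tendsto
      (fun t => √((x t ⬝ᵥ P *ᵥ x t) * (Pi.single i 1 ⬝ᵥ P⁻¹ *ᵥ Pi.single i 1))) l (𝓝 0) := by
    simpa using (h.mul_const _).sqrt
  refine squeeze_zero_norm (fun t => ?_) hbound
  rw [Real.norm_eq_abs, ← Real.sqrt_sq_eq_abs]
  refine Real.sqrt_le_sqrt ?_
  simpa using hP.sq_dotProduct_le (Pi.single i 1) (x t)

theorem PosDef.eventually_abs_dotProduct_lt [DecidableEq ι] {P : Matrix ι ι ℝ} (hP : P.PosDef)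
    (C : ι → ℝ) {x : ℝ → ι → ℝ} {R η : ℝ} (hη : 0 < η)
    (hV : ∀ δ > 0, ∀ᶠ t in atTop, x t ⬝ᵥ P *ᵥ x t < R + δ) :
    ∀ᶠ t in atTop, |C ⬝ᵥ x t| < √(R * (C ⬝ᵥ P⁻¹ *ᵥ C)) + η := by
  set c₀ := C ⬝ᵥ P⁻¹ *ᵥ C
  have hc₀ : 0 ≤ c₀ := hP.inv.dotProduct_mulVec_self_nonneg C
  have hRc₀ : R * c₀ ≤ √(R * c₀) ^ 2 := by
    rcases le_total 0 (R * c₀) with h | h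
    · rw [Real.sq_sqrt h]
    · exact h.trans (sq_nonneg _)
  filter_upwards [hV (η ^ 2 / (c₀ + 1)) (by positivity)] with t ht
  have hδ : η ^ 2 / (c₀ + 1) * c₀ < η ^ 2 := by
    rw [div_mul_eq_mul_div, div_lt_iff₀ (by positivity)]
    nlinarith [pow_pos hη 2]
  refine abs_lt_of_sq_lt_sq ?_ (by positivity)
  calc (C ⬝ᵥ x t) ^ 2 ≤ (x t ⬝ᵥ P *ᵥ x t) * c₀ := hP.sq_dotProduct_le C (x t)
    _ ≤ (R + η ^ 2 / (c₀ + 1)) * c₀ := mul_le_mul_of_nonneg_right ht.le hc₀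
    _ < (√(R * c₀) + η) ^ 2 := by nlinarith [Real.sqrt_nonneg (R * c₀)]

/-- The right-hand side minus the left-hand side is `‖L v - w J‖²`. -/
theorem dissipation_of_epsKYP {A P : Matrix ι ι ℝ} {B C : ι → ℝ} {L : Matrix κ ι ℝ}
    {J : κ → ℝ} {D ε : ℝ} (hP : P.IsSymm)
    (h₁ : P * A + Aᵀ * P = -(Lᵀ * L) - (ε / 2) • P)
    (h₂ : P *ᵥ B = C - Lᵀ *ᵥ J) (h₃ : J ⬝ᵥ J = 2 * D) (v : ι → ℝ) (w : ℝ) :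
    (A *ᵥ v - w • B) ⬝ᵥ P *ᵥ v + v ⬝ᵥ P *ᵥ (A *ᵥ v - w • B)
      ≤ -(ε / 2) * (v ⬝ᵥ P *ᵥ v) - 2 * w * (C ⬝ᵥ v - D * w) := by
  have hA : A *ᵥ v ⬝ᵥ P *ᵥ v + v ⬝ᵥ P *ᵥ (A *ᵥ v)
      = -(L *ᵥ v ⬝ᵥ L *ᵥ v) - ε / 2 * (v ⬝ᵥ P *ᵥ v) := by
    have h := congrArg (fun M => v ⬝ᵥ M *ᵥ v) h₁
    simp only [add_mulVec, sub_mulVec, neg_mulVec, smul_mulVec, dotProduct_add, dotProduct_sub,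
      dotProduct_neg, dotProduct_smul, dotProduct_transpose_mul_mulVec, smul_eq_mul] at h
    rw [← h, ← mulVec_mulVec, add_comm]
  have hB : v ⬝ᵥ P *ᵥ B = C ⬝ᵥ v - L *ᵥ v ⬝ᵥ J := by
    rw [h₂, dotProduct_sub, dotProduct_mulVec v Lᵀ, vecMul_transpose, dotProduct_comm v C]
  have hsq := dotProduct_self_star_nonneg (L *ᵥ v - w • J)
  simp only [star_trivial, sub_dotProduct, dotProduct_sub, smul_dotProduct, dotProduct_smul,
    h₃, smul_eq_mul, dotProduct_comm J] at hsq
  simp only [sub_dotProduct, dotProduct_sub, smul_dotProduct, mulVec_sub, mulVec_smul,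
    dotProduct_smul, smul_eq_mul]
  rw [hP.dotProduct_mulVec_comm B, hB]
  linarith

theorem sector_dissipation_of_epsKYP {A P : Matrix ι ι ℝ} {B C : ι → ℝ} {L : Matrix κ ι ℝ}
    {J : κ → ℝ} {α β ε : ℝ} (hαβ : α < β) (hP : P.IsSymm)
    (h₁ : P * (A - α • vecMulVec B C) + (A - α • vecMulVec B C)ᵀ * P
      = -(Lᵀ * L) - (ε / 2) • P)
    (h₂ : P *ᵥ B = C - Lᵀ *ᵥ J) (h₃ : J ⬝ᵥ J = 2 / (β - α)) (v : ι → ℝ) (u : ℝ) :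
    (A *ᵥ v - u • B) ⬝ᵥ P *ᵥ v + v ⬝ᵥ P *ᵥ (A *ᵥ v - u • B)
      ≤ -(ε / 2) * (v ⬝ᵥ P *ᵥ v)
        - 2 * (1 / (β - α) * (u - α * (C ⬝ᵥ v)) * (β * (C ⬝ᵥ v) - u)) := by
  have hshift : (A - α • vecMulVec B C) *ᵥ v - (u - α * (C ⬝ᵥ v)) • B = A *ᵥ v - u • B := by
    rw [sub_mulVec, smul_mulVec, vecMulVec_mulVec, sub_smul, op_smul_eq_smul, smul_smul]
    abel
  have h := dissipation_of_epsKYP hP h₁ h₂ (h₃.trans (div_eq_mul_one_div 2 _)) v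
    (u - α * (C ⬝ᵥ v))
  rw [hshift] at h
  convert h using 2
  field_simp [sub_ne_zero.2 hαβ.ne']
  ring

end Matrix

theorem HasDerivAt.dotProduct_mulVec_self {ι : Type*} [Fintype ι] (P : Matrix ι ι ℝ)
    {x : ℝ → ι → ℝ} {x' : ι → ℝ} {t : ℝ} (h : HasDerivAt x x' t) :
    HasDerivAt (fun s => x s ⬝ᵥ P *ᵥ x s) (x' ⬝ᵥ P *ᵥ x t + x t ⬝ᵥ P *ᵥ x') t := by
  have hPx : HasDerivAt (fun s => P *ᵥ x s) (P *ᵥ x') t :=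
    (LinearMap.toContinuousLinearMap P.mulVecLin).hasFDerivAt.comp_hasDerivAt t h
  have h_sum := HasDerivAt.fun_sum fun i (_ : i ∈ Finset.univ) =>
    (hasDerivAt_pi.1 h i).mul (hasDerivAt_pi.1 hPx i)
  simpa [dotProduct, Finset.sum_add_distrib] using h_sum

theorem eventually_lt_of_hasDerivAt_le {V V' : ℝ → ℝ} {a k c δ : ℝ} (hk : 0 < k) (hδ : 0 < δ)
    (hV : ∀ t, a ≤ t → HasDerivAt V (V' t) t) (hle : ∀ t, a ≤ t → V' t ≤ -k * V t + c) :
    ∀ᶠ t in atTop, V t < c / k + δ := by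
  have hgronwall : ∀ t, a ≤ t → V t ≤ gronwallBound (V a) (-k) c (t - a) := fun t ht =>
    le_gronwallBound_of_liminf_deriv_right_le
      (fun s hs => (hV s hs.1).continuousAt.continuousWithinAt)
      (fun s hs r hr => by
        simpa [slope_def_field, div_eq_inv_mul] using
          ((hV s hs.1).hasDerivWithinAt (s := Set.Ici s)).liminf_right_slope_le hr)
      le_rfl (fun s hs => hle s hs.1) t (Set.right_mem_Icc.2 ht)
  have hexp : Tendsto (fun t => Real.exp (-k * (t - a))) atTop (𝓝 0) := by
    have h := (tendsto_atTop_add_const_right atTop (-a) tendsto_id).const_mul_atTop hk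
    simpa [Function.comp_def, sub_eq_add_neg] using Real.tendsto_exp_neg_atTop_nhds_zero.comp h
  have hlim : Tendsto (fun t => gronwallBound (V a) (-k) c (t - a)) atTop (𝓝 (c / k)) := by
    simp only [gronwallBound_of_K_ne_0 (neg_ne_zero.2 hk.ne')]
    convert (hexp.const_mul (V a)).add ((hexp.sub_const 1).const_mul (c / -k)) using 2
    field_simp
    ring
  filter_upwards [eventually_ge_atTop a, hlim.eventually (gt_mem_nhds (lt_add_of_pos_right _ hδ))]
    with t hat ht
  exact (hgronwall t hat).trans_lt ht

theorem tendsto_zero_of_hasDerivAt_le {V V' : ℝ → ℝ} {a k : ℝ} (hk : 0 < k) (hV₀ : ∀ t, 0 ≤ V t)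
    (hV : ∀ t, a ≤ t → HasDerivAt V (V' t) t) (hle : ∀ t, a ≤ t → V' t ≤ -k * V t) :
    Tendsto V atTop (𝓝 0) := by
  refine tendsto_order.2 ⟨fun b hb => .of_forall fun t => hb.trans_le (hV₀ t), fun b hb => ?_⟩
  simpa using eventually_lt_of_hasDerivAt_le (c := 0) hk hb hV (by simpa using hle)

theorem two_step_sequential_circle_criterion_general {m p : ℕ}
    (A : Matrix (Fin m) (Fin m) ℝ) (B : Fin m → ℝ) (C : Fin m → ℝ)
    (α₁ β₁ α₂ β₂ ε₁ ε₂ M₁ : ℝ)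
    (hαβ₁ : α₁ < β₁) (hαβ₂ : α₂ < β₂)
    (hε₁ : 0 < ε₁) (hε₂ : 0 < ε₂)
    (P₁ P₂ : Matrix (Fin m) (Fin m) ℝ) (hP₁ : P₁.PosDef) (hP₂ : P₂.PosDef)
    (L₁ L₂ : Matrix (Fin p) (Fin m) ℝ) (J₁ J₂ : Fin p → ℝ)
    (hKYP1₁ : P₁ * (A - α₁ • vecMulVec B C) + (A - α₁ • vecMulVec B C)ᵀ * P₁
                = -(L₁ᵀ * L₁) - (ε₁ / 2) • P₁)
    (hKYP2₁ : P₁.mulVec B = C - L₁ᵀ.mulVec J₁)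
    (hKYP3₁ : J₁ ⬝ᵥ J₁ = 2 / (β₁ - α₁))
    (hKYP1₂ : P₂ * (A - α₂ • vecMulVec B C) + (A - α₂ • vecMulVec B C)ᵀ * P₂
                = -(L₂ᵀ * L₂) - (ε₂ / 2) • P₂)
    (hKYP2₂ : P₂.mulVec B = C - L₂ᵀ.mulVec J₂)
    (hKYP3₂ : J₂ ⬝ᵥ J₂ = 2 / (β₂ - α₂))
    (n : ℝ → ℝ → ℝ)
    (hb : ∀ t y, -M₁ < (1 / (β₁ - α₁)) * (n t y - α₁ * y) * (β₁ * y - n t y))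
    (hc : ∃ η₁ > (0 : ℝ), ∀ t y,
        |y| < 2 * Real.sqrt ((M₁ / ε₁) * (C ⬝ᵥ P₁⁻¹.mulVec C)) + η₁ →
          0 ≤ (n t y - α₂ * y) * (β₂ * y - n t y))
    (x : ℝ → Fin m → ℝ)
    (hx : ∀ t, 0 ≤ t → HasDerivAt x (A.mulVec (x t) - n t (C ⬝ᵥ x t) • B) t) :
    Tendsto x atTop (nhds 0) := by
  obtain ⟨η₁, hη₁, hsector₂⟩ := hc
  have hV (P : Matrix (Fin m) (Fin m) ℝ) (t : ℝ) (ht : 0 ≤ t) :=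
    (hx t ht).dotProduct_mulVec_self P
  have hV₁ : ∀ δ > 0, ∀ᶠ t in atTop, x t ⬝ᵥ P₁ *ᵥ x t < 2 * M₁ / (ε₁ / 2) + δ :=
    fun δ hδ => eventually_lt_of_hasDerivAt_le (half_pos hε₁) hδ (hV P₁) fun t _ => by
      have := sector_dissipation_of_epsKYP hαβ₁ hP₁.isSymm hKYP1₁ hKYP2₁ hKYP3₁ (x t)
        (n t (C ⬝ᵥ x t))
      linarith [hb t (C ⬝ᵥ x t)]
  have hradius : √(2 * M₁ / (ε₁ / 2) * (C ⬝ᵥ P₁⁻¹ *ᵥ C))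
      = 2 * √(M₁ / ε₁ * (C ⬝ᵥ P₁⁻¹ *ᵥ C)) := by
    rw [show 2 * M₁ / (ε₁ / 2) = 2 ^ 2 * (M₁ / ε₁) by ring, mul_assoc,
      Real.sqrt_mul (by positivity), Real.sqrt_sq zero_le_two]
  obtain ⟨T, hT⟩ := ((hP₁.eventually_abs_dotProduct_lt C hη₁ hV₁).and
    (eventually_ge_atTop 0)).exists_forall_of_atTop
  have hV₂ : Tendsto (fun t => x t ⬝ᵥ P₂ *ᵥ x t) atTop (𝓝 0) :=
    tendsto_zero_of_hasDerivAt_le (half_pos hε₂) (fun t => hP₂.dotProduct_mulVec_self_nonneg _)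
      (fun t ht => hV P₂ t (hT t ht).2) fun t ht => by
        have := sector_dissipation_of_epsKYP hαβ₂ hP₂.isSymm hKYP1₂ hKYP2₂ hKYP3₂ (x t)
          (n t (C ⬝ᵥ x t))
        have hsector := hsector₂ t (C ⬝ᵥ x t) (hradius ▸ (hT t ht).1)
        linarith [mul_nonneg (one_div_pos.2 (sub_pos.2 hαβ₂)).le hsector]
  exact hP₂.tendsto_zero_of_tendsto_dotProduct_mulVec hV₂

/-- Theorem 2 (two-step sequential circle criterion), state-space form for a
strictly proper linear block: the first (weak) step confines the output,
and on that region the nonlinearity lies in the sector `[α₂, β₂]`, so the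
standard Circle Criterion yields global asymptotic stability. -/
theorem two_step_sequential_circle_criterion {m p : ℕ}
    (A : Matrix (Fin m) (Fin m) ℝ) (B : Fin m → ℝ) (C : Fin m → ℝ)
    (α₁ β₁ α₂ β₂ ε₁ ε₂ M₁ : ℝ)
    (hαβ₁ : α₁ < β₁) (hαβ₂ : α₂ < β₂)
    (hε₁ : 0 < ε₁) (hε₂ : 0 < ε₂) (hM₁ : 0 < M₁)
    (P₁ P₂ : Matrix (Fin m) (Fin m) ℝ) (hP₁ : P₁.PosDef) (hP₂ : P₂.PosDef)
    (L₁ L₂ : Matrix (Fin p) (Fin m) ℝ) (J₁ J₂ : Fin p → ℝ)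
    (hKYP1₁ : P₁ * (A - α₁ • vecMulVec B C) + (A - α₁ • vecMulVec B C)ᵀ * P₁
                = -(L₁ᵀ * L₁) - (ε₁ / 2) • P₁)
    (hKYP2₁ : P₁.mulVec B = C - L₁ᵀ.mulVec J₁)
    (hKYP3₁ : J₁ ⬝ᵥ J₁ = 2 / (β₁ - α₁))
    (hKYP1₂ : P₂ * (A - α₂ • vecMulVec B C) + (A - α₂ • vecMulVec B C)ᵀ * P₂
                = -(L₂ᵀ * L₂) - (ε₂ / 2) • P₂)
    (hKYP2₂ : P₂.mulVec B = C - L₂ᵀ.mulVec J₂)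
    (hKYP3₂ : J₂ ⬝ᵥ J₂ = 2 / (β₂ - α₂))
    (n : ℝ → ℝ → ℝ) (hn : Continuous fun q : ℝ × ℝ => n q.1 q.2)
    (hb : ∀ t y, -M₁ < (1 / (β₁ - α₁)) * (n t y - α₁ * y) * (β₁ * y - n t y))
    (hc : ∃ η₁ > (0 : ℝ), ∀ t y,
        |y| < 2 * Real.sqrt ((M₁ / ε₁) * (C ⬝ᵥ P₁⁻¹.mulVec C)) + η₁ →
          0 ≤ (n t y - α₂ * y) * (β₂ * y - n t y))
    (x : ℝ → Fin m → ℝ)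
    (hx : ∀ t, 0 ≤ t → HasDerivAt x (A.mulVec (x t) - n t (C ⬝ᵥ x t) • B) t) :
    Tendsto x atTop (nhds 0) :=
  two_step_sequential_circle_criterion_general A B C α₁ β₁ α₂ β₂ ε₁ ε₂ M₁ hαβ₁ hαβ₂ hε₁ hε₂ P₁ P₂
    hP₁ hP₂ L₁ L₂ J₁ J₂ hKYP1₁ hKYP2₁ hKYP3₁ hKYP1₂ hKYP2₂ hKYP3₂ n hb hc x hx
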